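/- Fix a real number s > 9/2. For each odd integer N ≥ 3 define Q_N(s) := (1/N⁴) · Σ_{n ∈ Λ_N*} |n|^{1-2s} · Σ_{k ∈ Λ_N*, k ≠ n} |n×k|⁶ · (|n-k| + |k|) / ( |k|⁴ · |n-k|² ). Then Q_N(s) → 0 as N → ∞ (along odd N). -/

import Mathlib

open Filter

/-- The Euclidean norm of a lattice point `n ∈ ℤ² ⊂ ℝ²`. -/
noncomputable def enorm2 (n : ℤ × ℤ) : ℝ :=
  Real.sqrt ((n.1 : ℝ) ^ 2 + (n.2 : ℝ) ^ 2)

/-- The nonzero modes `Λ_N* = {n ∈ ℤ² \ {0} : |n₁| ≤ (N-1)/2, |n₂| ≤ (N-1)/2}`. -/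
noncomputable def Lam (N : ℕ) : Finset (ℤ × ℤ) :=
  ((Finset.Icc (-(((N : ℤ) - 1) / 2)) (((N : ℤ) - 1) / 2)) ×ˢ
    (Finset.Icc (-(((N : ℤ) - 1) / 2)) (((N : ℤ) - 1) / 2))).erase (0, 0)

/-- The cross product `n×k := n₂k₁ - n₁k₂` of lattice points. -/
def cross (n k : ℤ × ℤ) : ℤ := n.2 * k.1 - n.1 * k.2

/-- The torus consistency quantity
`Q_N(s) = (1/N⁴) Σ_{n ∈ Λ_N*} |n|^{1-2s} Σ_{k ∈ Λ_N*, k ≠ n}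
  |n×k|⁶ (|n-k| + |k|) / (|k|⁴ |n-k|²)`. -/
noncomputable def Q (s : ℝ) (N : ℕ) : ℝ :=
  (1 / (N : ℝ) ^ 4) *
    ∑ n ∈ Lam N, enorm2 n ^ (1 - 2 * s) *
      ∑ k ∈ (Lam N).erase n,
        |((cross n k : ℤ) : ℝ)| ^ 6 * (enorm2 (n - k) + enorm2 k) /
          (enorm2 k ^ 4 * enorm2 (n - k) ^ 2)

/-!
Since `n×k = -(n×(n-k))`, Cauchy–Schwarz gives `|n×k| ≤ |n| |k|` and `|n×k| ≤ |n| |n-k|`, so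
`|n×k|⁶ ≤ |n|⁶ |k|⁴ |n-k|²` and each inner summand is at most `|n|⁶ (|n-k| + |k|) ≤ 3N |n|⁶`.
With at most `N²` values of `k`, this gives `Q_N(s) ≤ (3/N) Σ_{n ∈ ℤ² \ 0} |n|^{7-2s}`, and the
lattice sum converges because `2s - 7 > 2`.
-/

open Topology

lemma enorm2_nonneg (n : ℤ × ℤ) : 0 ≤ enorm2 n := Real.sqrt_nonneg _

lemma max_abs_le_enorm2 (p : ℤ × ℤ) : max |(p.1 : ℝ)| |(p.2 : ℝ)| ≤ enorm2 p :=
  max_le (Real.abs_le_sqrt (by nlinarith)) (Real.abs_le_sqrt (by nlinarith))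

lemma max_abs_pos {p : ℤ × ℤ} (hp : p ≠ 0) : 0 < max |(p.1 : ℝ)| |(p.2 : ℝ)| := by
  have hcoord : p.1 ≠ 0 ∨ p.2 ≠ 0 := by
    by_contra! h
    exact hp (Prod.ext h.1 h.2)
  rcases hcoord with h | h
  · exact lt_max_of_lt_left (by positivity)
  · exact lt_max_of_lt_right (by positivity)

lemma enorm2_pos {p : ℤ × ℤ} (hp : p ≠ 0) : 0 < enorm2 p :=
  (max_abs_pos hp).trans_le (max_abs_le_enorm2 p)

lemma enorm2_le_abs_add_abs (n : ℤ × ℤ) : enorm2 n ≤ |(n.1 : ℝ)| + |(n.2 : ℝ)| :=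
  Real.sqrt_le_iff.mpr ⟨by positivity, by
    nlinarith [sq_abs (n.1 : ℝ), sq_abs (n.2 : ℝ), abs_nonneg (n.1 : ℝ), abs_nonneg (n.2 : ℝ)]⟩

lemma abs_cross_le (n k : ℤ × ℤ) : |((cross n k : ℤ) : ℝ)| ≤ enorm2 n * enorm2 k := by
  rw [enorm2, enorm2, ← Real.sqrt_mul (by positivity), ← Real.sqrt_sq_eq_abs]
  apply Real.sqrt_le_sqrt
  simp only [cross]
  push_cast
  nlinarith [sq_nonneg ((n.1 : ℝ) * k.1 + (n.2 : ℝ) * k.2)]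

lemma abs_cross_le_sub (n k : ℤ × ℤ) :
    |((cross n k : ℤ) : ℝ)| ≤ enorm2 n * enorm2 (n - k) := by
  have hanti : cross n k = -cross n (n - k) := by
    simp only [cross, Prod.fst_sub, Prod.snd_sub]
    ring
  rw [hanti, Int.cast_neg, abs_neg]
  exact abs_cross_le n (n - k)

lemma abs_cross_pow_six_le (n k : ℤ × ℤ) :
    |((cross n k : ℤ) : ℝ)| ^ 6 ≤ enorm2 n ^ 6 * enorm2 k ^ 4 * enorm2 (n - k) ^ 2 := by
  have h₁ := pow_le_pow_left₀ (abs_nonneg _) (abs_cross_le n k) 4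
  have h₂ := pow_le_pow_left₀ (abs_nonneg _) (abs_cross_le_sub n k) 2
  calc |((cross n k : ℤ) : ℝ)| ^ 6
      = |((cross n k : ℤ) : ℝ)| ^ 4 * |((cross n k : ℤ) : ℝ)| ^ 2 := by ring
    _ ≤ (enorm2 n * enorm2 k) ^ 4 * (enorm2 n * enorm2 (n - k)) ^ 2 :=
        mul_le_mul h₁ h₂ (by positivity) (by positivity)
    _ = enorm2 n ^ 6 * enorm2 k ^ 4 * enorm2 (n - k) ^ 2 := by ring

-- Unconditional: where a denominator vanishes, the left side is `x / 0 = 0`.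
lemma cross_summand_le (n k : ℤ × ℤ) :
    |((cross n k : ℤ) : ℝ)| ^ 6 * (enorm2 (n - k) + enorm2 k) /
        (enorm2 k ^ 4 * enorm2 (n - k) ^ 2) ≤
      enorm2 n ^ 6 * (enorm2 (n - k) + enorm2 k) := by
  have hsum : 0 ≤ enorm2 (n - k) + enorm2 k := add_nonneg (enorm2_nonneg _) (enorm2_nonneg _)
  apply div_le_of_le_mul₀ (by positivity) (by positivity)
  calc |((cross n k : ℤ) : ℝ)| ^ 6 * (enorm2 (n - k) + enorm2 k)
      ≤ enorm2 n ^ 6 * enorm2 k ^ 4 * enorm2 (n - k) ^ 2 * (enorm2 (n - k) + enorm2 k) :=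
        mul_le_mul_of_nonneg_right (abs_cross_pow_six_le n k) hsum
    _ = _ := by ring

lemma two_mul_abs_add_one_le_of_mem_Lam {N : ℕ} {n : ℤ × ℤ} (hn : n ∈ Lam N) :
    2 * |n.1| + 1 ≤ N ∧ 2 * |n.2| + 1 ≤ N := by
  simp only [Lam, Finset.mem_erase, Finset.mem_product, Finset.mem_Icc] at hn
  constructor <;> rw [abs_eq_max_neg] <;> omega

lemma card_Lam_le (N : ℕ) : (Lam N).card ≤ N ^ 2 := by
  refine (Finset.card_erase_le).trans ?_
  rw [Finset.card_product, Int.card_Icc, sq]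
  have : (((N : ℤ) - 1) / 2 + 1 - -(((N : ℤ) - 1) / 2)).toNat ≤ N := by omega
  exact Nat.mul_le_mul this this

lemma enorm2_sub_add_enorm2_le {N : ℕ} {n k : ℤ × ℤ} (hn : n ∈ Lam N) (hk : k ∈ Lam N) :
    enorm2 (n - k) + enorm2 k ≤ 3 * N := by
  have hcast : ∀ {p : ℤ × ℤ}, p ∈ Lam N →
      2 * |(p.1 : ℝ)| + 1 ≤ N ∧ 2 * |(p.2 : ℝ)| + 1 ≤ N := fun hp => by
    obtain ⟨h₁, h₂⟩ := two_mul_abs_add_one_le_of_mem_Lam hp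
    exact ⟨by exact_mod_cast h₁, by exact_mod_cast h₂⟩
  obtain ⟨hn₁, hn₂⟩ := hcast hn
  obtain ⟨hk₁, hk₂⟩ := hcast hk
  have hsub := enorm2_le_abs_add_abs (n - k)
  have hk := enorm2_le_abs_add_abs k
  simp only [Prod.fst_sub, Prod.snd_sub, Int.cast_sub] at hsub
  linarith [abs_sub (n.1 : ℝ) k.1, abs_sub (n.2 : ℝ) k.2]

lemma summable_enorm2_rpow {r : ℝ} (hr : r < -2) : Summable fun p : ℤ × ℤ => enorm2 p ^ r := by
  have hmax : Summable fun p : ℤ × ℤ => max |(p.1 : ℝ)| |(p.2 : ℝ)| ^ r := by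
    have := (EisensteinSeries.summable_one_div_norm_rpow (k := -r) (by linarith)).comp_injective
      (finTwoArrowEquiv ℤ).symm.injective
    simpa [Function.comp_def, EisensteinSeries.norm_eq_max_natAbs] using this
  refine hmax.of_nonneg_of_le (fun p => Real.rpow_nonneg (enorm2_nonneg p) r) fun p => ?_
  rcases eq_or_ne p 0 with rfl | hp
  · simp [enorm2]
  exact Real.rpow_le_rpow_of_nonpos (max_abs_pos hp) (max_abs_le_enorm2 p) (by linarith)

lemma sum_cross_summand_le {N : ℕ} {n : ℤ × ℤ} (hn : n ∈ Lam N) :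
    ∑ k ∈ (Lam N).erase n,
        |((cross n k : ℤ) : ℝ)| ^ 6 * (enorm2 (n - k) + enorm2 k) /
          (enorm2 k ^ 4 * enorm2 (n - k) ^ 2) ≤
      3 * (N : ℝ) ^ 3 * enorm2 n ^ 6 := by
  have hterm : ∀ k ∈ (Lam N).erase n,
      |((cross n k : ℤ) : ℝ)| ^ 6 * (enorm2 (n - k) + enorm2 k) /
          (enorm2 k ^ 4 * enorm2 (n - k) ^ 2) ≤ enorm2 n ^ 6 * (3 * N) := fun k hk =>
    (cross_summand_le n k).trans <| mul_le_mul_of_nonneg_left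
      (enorm2_sub_add_enorm2_le hn (Finset.mem_of_mem_erase hk)) (by positivity)
  have hcard : (((Lam N).erase n).card : ℝ) ≤ (N : ℝ) ^ 2 := by
    exact_mod_cast (Finset.card_erase_le).trans (card_Lam_le N)
  calc _ ≤ ((Lam N).erase n).card • (enorm2 n ^ 6 * (3 * N)) := Finset.sum_le_card_nsmul _ _ _ hterm
    _ ≤ (N : ℝ) ^ 2 * (enorm2 n ^ 6 * (3 * N)) := by
        rw [nsmul_eq_mul]
        exact mul_le_mul_of_nonneg_right hcard (by positivity)
    _ = 3 * (N : ℝ) ^ 3 * enorm2 n ^ 6 := by ring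

lemma Q_le {s : ℝ} (hs : 9 / 2 < s) (N : ℕ) :
    Q s N ≤ 3 * (∑' p : ℤ × ℤ, enorm2 p ^ (7 - 2 * s)) / N := by
  have hterm : ∀ n ∈ Lam N, enorm2 n ^ (1 - 2 * s) *
      ∑ k ∈ (Lam N).erase n,
        |((cross n k : ℤ) : ℝ)| ^ 6 * (enorm2 (n - k) + enorm2 k) /
          (enorm2 k ^ 4 * enorm2 (n - k) ^ 2) ≤
      3 * (N : ℝ) ^ 3 * enorm2 n ^ (7 - 2 * s) := fun n hn => by
    have hpos := enorm2_pos (Finset.ne_of_mem_erase hn)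
    calc _ ≤ enorm2 n ^ (1 - 2 * s) * (3 * (N : ℝ) ^ 3 * enorm2 n ^ 6) :=
          mul_le_mul_of_nonneg_left (sum_cross_summand_le hn) (by positivity)
      _ = 3 * (N : ℝ) ^ 3 * (enorm2 n ^ (1 - 2 * s) * enorm2 n ^ ((6 : ℕ) : ℝ)) := by
          rw [Real.rpow_natCast]; ring
      _ = 3 * (N : ℝ) ^ 3 * enorm2 n ^ (7 - 2 * s) := by
          rw [← Real.rpow_add hpos]; congr 2; push_cast; ring
  have hlattice : ∑ n ∈ Lam N, enorm2 n ^ (7 - 2 * s) ≤ ∑' p : ℤ × ℤ, enorm2 p ^ (7 - 2 * s) :=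
    (summable_enorm2_rpow (by linarith)).sum_le_tsum _
      fun p _ => Real.rpow_nonneg (enorm2_nonneg p) _
  calc Q s N ≤ 1 / (N : ℝ) ^ 4 * ∑ n ∈ Lam N, 3 * (N : ℝ) ^ 3 * enorm2 n ^ (7 - 2 * s) :=
        mul_le_mul_of_nonneg_left (Finset.sum_le_sum hterm) (by positivity)
    _ = 3 / N * ∑ n ∈ Lam N, enorm2 n ^ (7 - 2 * s) := by
        rw [← Finset.mul_sum]; field_simp
    _ ≤ 3 / N * ∑' p : ℤ × ℤ, enorm2 p ^ (7 - 2 * s) :=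
        mul_le_mul_of_nonneg_left hlattice (by positivity)
    _ = 3 * (∑' p : ℤ × ℤ, enorm2 p ^ (7 - 2 * s)) / N := by ring

lemma Q_nonneg (s : ℝ) (N : ℕ) : 0 ≤ Q s N := by
  unfold Q
  refine mul_nonneg (by positivity) (Finset.sum_nonneg fun n _ => ?_)
  refine mul_nonneg (Real.rpow_nonneg (enorm2_nonneg n) _) (Finset.sum_nonneg fun k _ => ?_)
  have := enorm2_nonneg k
  have := enorm2_nonneg (n - k)
  positivity

lemma tendsto_Q_atTop {s : ℝ} (hs : 9 / 2 < s) : Tendsto (Q s) atTop (𝓝 0) :=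
  squeeze_zero (Q_nonneg s) (Q_le hs)
    (tendsto_const_nhds.div_atTop tendsto_natCast_atTop_atTop)

/-- For every `s > 9/2`, `Q_N(s) → 0` as `N → ∞` along odd `N`. -/
theorem Q_tendsto_zero (s : ℝ) (hs : 9 / 2 < s) :
    Tendsto (fun m : ℕ => Q s (2 * m + 3)) atTop (nhds 0) :=
  (tendsto_Q_atTop hs).comp <| tendsto_atTop_mono (fun m => (by omega : m ≤ 2 * m + 3)) tendsto_id
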